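/- arXiv:2111.06328 — 2 statements merged into one kernel-verified Lean document; each statement's English description precedes it below -/
import Mathlib

section
/- Let f : ℝ^d → ℝ be differentiable, L-smooth and σ-strongly convex, with minimizer x*. Suppose Y is an ℝ^d-valued random vector with E‖Y‖² < ∞ satisfying the distributional fixed-point equation Y =_d Y − √α ∇f(√α Y + x*) + √α w, where w is independent of Y with mean 0 and covariance Σ. If 0 < α ≤ σ/L², then E‖Y‖² ≤ Trace(Σ)/(2σ − L²α) ≤ Trace(Σ)/σ. -/
/-!
The fixed-point equation says `Y =_d T Y + √α w` with `T y = y - √α ∇f(√α y + x*)`.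
Strong convexity makes `∇f` strongly monotone around `x*`, and together with the Lipschitz bound
this gives `‖T y‖² ≤ (1 - α (2σ - L²α)) ‖y‖²`. Since `w` is centred and independent of `Y`, the
cross term vanishes and `E‖Y‖² = E‖T Y‖² + α E‖w‖² ≤ (1 - α (2σ - L²α)) E‖Y‖² + α tr Σ`.
-/

open MeasureTheory ProbabilityTheory RealInnerProductSpace Matrix

section GradientStep

variable {E : Type*} [NormedAddCommGroup E] [InnerProductSpace ℝ E] [CompleteSpace E]
  {f : E → ℝ} {L σ : ℝ}

theorem mul_norm_sub_sq_le_inner_gradient_sub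
    (hsc : ∀ x y, f y ≥ f x + ⟪gradient f x, y - x⟫ + σ / 2 * ‖x - y‖ ^ 2) (x y : E) :
    σ * ‖x - y‖ ^ 2 ≤ ⟪gradient f x - gradient f y, x - y⟫ := by
  have hxy := hsc x y
  have hyx := hsc y x
  rw [← neg_sub x y, inner_neg_right] at hxy
  rw [norm_sub_rev] at hyx
  rw [inner_sub_left]
  linarith

theorem norm_sub_smul_gradient_sq_le
    (hsmooth : ∀ x y, ‖gradient f x - gradient f y‖ ≤ L * ‖x - y‖)
    (hsc : ∀ x y, f y ≥ f x + ⟪gradient f x, y - x⟫ + σ / 2 * ‖x - y‖ ^ 2)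
    {x₀ : E} (hmin : gradient f x₀ = 0) (s : ℝ) (y : E) :
    ‖y - s • gradient f (s • y + x₀)‖ ^ 2 ≤ (1 - s ^ 2 * (2 * σ - L ^ 2 * s ^ 2)) * ‖y‖ ^ 2 := by
  set g := gradient f (s • y + x₀)
  have hsy : ‖s • y‖ ^ 2 = s ^ 2 * ‖y‖ ^ 2 := by rw [norm_smul, mul_pow, Real.norm_eq_abs, sq_abs]
  have hmono : σ * (s ^ 2 * ‖y‖ ^ 2) ≤ s * ⟪y, g⟫ := by
    have h := mul_norm_sub_sq_le_inner_gradient_sub hsc (s • y + x₀) x₀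
    rwa [hmin, sub_zero, add_sub_cancel_right, hsy, real_inner_smul_right, real_inner_comm] at h
  have hlip : ‖g‖ ^ 2 ≤ L ^ 2 * (s ^ 2 * ‖y‖ ^ 2) := by
    have h := hsmooth (s • y + x₀) x₀
    rw [hmin, sub_zero, add_sub_cancel_right] at h
    rw [← hsy, ← mul_pow]
    exact pow_le_pow_left₀ (norm_nonneg g) h 2
  rw [norm_sub_sq_real, real_inner_smul_right, norm_smul, mul_pow, Real.norm_eq_abs, sq_abs]
  nlinarith [mul_le_mul_of_nonneg_left hlip (sq_nonneg s)]

end GradientStep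

section FixedPoint

variable {Ω E : Type*} [MeasurableSpace Ω] {P : Measure Ω} [IsFiniteMeasure P]
  [NormedAddCommGroup E] [InnerProductSpace ℝ E] [CompleteSpace E]
  [MeasurableSpace E] [BorelSpace E]

theorem ProbabilityTheory.IndepFun.integral_norm_add_sq {X W : Ω → E} (hXW : IndepFun X W P)
    (hX : MemLp X 2 P) (hW : MemLp W 2 P) (hW0 : ∫ ω, W ω ∂P = 0) :
    ∫ ω, ‖X ω + W ω‖ ^ 2 ∂P = ∫ ω, ‖X ω‖ ^ 2 ∂P + ∫ ω, ‖W ω‖ ^ 2 ∂P := by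
  have hX2 := (memLp_two_iff_integrable_sq_norm hX.1).1 hX
  have hW2 := (memLp_two_iff_integrable_sq_norm hW.1).1 hW
  have hinner : Integrable (fun ω => ⟪X ω, W ω⟫) P :=
    hXW.integrable_bilin (hX.integrable one_le_two) (hW.integrable one_le_two) (innerSL ℝ)
  have hcross : ∫ ω, ⟪X ω, W ω⟫ ∂P = 0 := by
    have h := hXW.integral_bilin (hX.integrable one_le_two) (hW.integrable one_le_two) (innerSL ℝ)
    rwa [hW0, map_zero] at h
  have hXinner : Integrable (fun ω => ‖X ω‖ ^ 2 + 2 * ⟪X ω, W ω⟫) P :=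
    hX2.add (hinner.const_mul 2)
  simp_rw [norm_add_sq_real]
  rw [integral_add hXinner hW2, integral_add hX2 (hinner.const_mul 2),
    integral_const_mul, hcross, mul_zero, add_zero]

theorem integral_norm_sq_le_of_identDistrib_map_add [SecondCountableTopology E]
    {Y W : Ω → E} {T : E → E} {ρ : ℝ}
    (hT : Measurable T) (hTρ : ∀ y, ‖T y‖ ^ 2 ≤ ρ * ‖y‖ ^ 2) (hYW : IndepFun Y W P)
    (hY : MemLp Y 2 P) (hW : MemLp W 2 P) (hW0 : ∫ ω, W ω ∂P = 0)
    (hfix : IdentDistrib Y (fun ω => T (Y ω) + W ω) P P) :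
    (1 - ρ) * ∫ ω, ‖Y ω‖ ^ 2 ∂P ≤ ∫ ω, ‖W ω‖ ^ 2 ∂P := by
  have hY2 := (memLp_two_iff_integrable_sq_norm hY.1).1 hY
  have hTY : AEStronglyMeasurable (fun ω => T (Y ω)) P :=
    (hT.comp_aemeasurable hY.1.aemeasurable).aestronglyMeasurable
  have hTY2 : Integrable (fun ω => ‖T (Y ω)‖ ^ 2) P :=
    (hY2.const_mul ρ).mono' (hTY.norm.pow 2) (.of_forall fun ω => by
      simpa only [norm_pow, norm_norm] using hTρ (Y ω))
  have hsplit : ∫ ω, ‖Y ω‖ ^ 2 ∂P = ∫ ω, ‖T (Y ω)‖ ^ 2 ∂P + ∫ ω, ‖W ω‖ ^ 2 ∂P := by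
    have hpyth : ∫ ω, ‖T (Y ω) + W ω‖ ^ 2 ∂P
        = ∫ ω, ‖T (Y ω)‖ ^ 2 ∂P + ∫ ω, ‖W ω‖ ^ 2 ∂P :=
      (hYW.comp hT measurable_id).integral_norm_add_sq
        ((memLp_two_iff_integrable_sq_norm hTY).2 hTY2) hW hW0
    rw [← hpyth]
    exact (hfix.comp (continuous_norm.pow 2).measurable).integral_eq
  have hcontract : ∫ ω, ‖T (Y ω)‖ ^ 2 ∂P ≤ ρ * ∫ ω, ‖Y ω‖ ^ 2 ∂P := by
    rw [← integral_const_mul]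
    exact integral_mono hTY2 (hY2.const_mul ρ) fun ω => hTρ (Y ω)
  linarith

end FixedPoint

theorem integral_norm_sq_eq_trace {Ω ι : Type*} [MeasurableSpace Ω] {P : Measure Ω}
    [Fintype ι] {w : Ω → EuclideanSpace ℝ ι} (hw : MemLp w 2 P) {S : Matrix ι ι ℝ}
    (hS : ∀ i j, ∫ ω, w ω i * w ω j ∂P = S i j) :
    ∫ ω, ‖w ω‖ ^ 2 ∂P = S.trace := by
  have hcoord i : Integrable (fun ω => w ω i ^ 2) P :=
    ((EuclideanSpace.proj (𝕜 := ℝ) i).comp_memLp' hw).integrable_sq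
  simp_rw [EuclideanSpace.real_norm_sq_eq]
  rw [integral_finsetSum _ fun i _ => hcoord i, Matrix.trace]
  exact Finset.sum_congr rfl fun i _ => by simpa only [sq, Matrix.diag_apply] using hS i i

theorem stmt9_general {d : ℕ} (f : EuclideanSpace ℝ (Fin d) → ℝ) (L σ : ℝ)
    (hL : 0 < L) (hσ : 0 < σ)
    (hsmooth : ∀ x y, ‖gradient f x - gradient f y‖ ≤ L * ‖x - y‖)
    (hsc : ∀ x y, f y ≥ f x + ⟪gradient f x, y - x⟫ + σ / 2 * ‖x - y‖ ^ 2)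
    (xstar : EuclideanSpace ℝ (Fin d)) (hmin : gradient f xstar = 0)
    {Ω : Type*} [MeasurableSpace Ω] (P : Measure Ω) [IsProbabilityMeasure P]
    (Y w : Ω → EuclideanSpace ℝ (Fin d)) (hYm : Measurable Y) (hwm : Measurable w)
    (hindep : IndepFun Y w P)
    (hYint : Integrable (fun ω => ‖Y ω‖ ^ 2) P)
    (hwint : Integrable (fun ω => ‖w ω‖ ^ 2) P)
    (hmean : ∫ ω, w ω ∂P = 0)
    (S : Matrix (Fin d) (Fin d) ℝ)
    (hcov : ∀ i j, ∫ ω, w ω i * w ω j ∂P = S i j)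
    (α : ℝ) (hα : 0 < α) (hα' : α ≤ σ / L ^ 2)
    (hfix : P.map Y = P.map (fun ω =>
      Y ω - Real.sqrt α • gradient f (Real.sqrt α • Y ω + xstar) + Real.sqrt α • w ω)) :
    (∫ ω, ‖Y ω‖ ^ 2 ∂P) ≤ S.trace / (2 * σ - L ^ 2 * α) ∧
      S.trace / (2 * σ - L ^ 2 * α) ≤ S.trace / σ := by
  set s := Real.sqrt α
  have hs : s ^ 2 = α := Real.sq_sqrt hα.le
  have hgrad : Continuous (gradient f) :=
    (LipschitzWith.of_dist_le' fun x y => by simpa only [dist_eq_norm] using hsmooth x y).continuous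
  have hw : MemLp w 2 P := (memLp_two_iff_integrable_sq_norm hwm.aestronglyMeasurable).2 hwint
  have hnoise : ∫ ω, ‖s • w ω‖ ^ 2 ∂P = α * S.trace := by
    simp_rw [norm_smul, mul_pow, Real.norm_eq_abs, sq_abs, hs]
    rw [integral_const_mul, integral_norm_sq_eq_trace hw hcov]
  have hmoment : (1 - (1 - α * (2 * σ - L ^ 2 * α))) * ∫ ω, ‖Y ω‖ ^ 2 ∂P ≤ α * S.trace :=
    hnoise ▸ integral_norm_sq_le_of_identDistrib_map_add (W := fun ω => s • w ω)
      (T := fun y => y - s • gradient f (s • y + xstar)) (by fun_prop)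
      (fun y => hs ▸ norm_sub_smul_gradient_sq_le hsmooth hsc hmin s y)
      (hindep.comp measurable_id (measurable_const_smul s))
      ((memLp_two_iff_integrable_sq_norm hYm.aestronglyMeasurable).2 hYint) (hw.const_smul s)
      (by rw [integral_smul, hmean, smul_zero]) ⟨hYm.aemeasurable, by fun_prop, hfix⟩
  have htrace : 0 ≤ S.trace :=
    integral_norm_sq_eq_trace hw hcov ▸ integral_nonneg fun ω => by positivity
  have hLα : L ^ 2 * α ≤ σ := by rwa [le_div_iff₀' (by positivity)] at hα'
  constructor
  · rw [le_div_iff₀' (by linarith)]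
    nlinarith
  · gcongr
    linarith

theorem stmt9 {d : ℕ} (f : EuclideanSpace ℝ (Fin d) → ℝ) (L σ : ℝ)
    (hL : 0 < L) (hσ : 0 < σ)
    (hdiff : Differentiable ℝ f)
    (hsmooth : ∀ x y, ‖gradient f x - gradient f y‖ ≤ L * ‖x - y‖)
    (hsc : ∀ x y, f y ≥ f x + ⟪gradient f x, y - x⟫ + σ / 2 * ‖x - y‖ ^ 2)
    (xstar : EuclideanSpace ℝ (Fin d)) (hmin : gradient f xstar = 0)
    {Ω : Type*} [MeasurableSpace Ω] (P : Measure Ω) [IsProbabilityMeasure P]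
    (Y w : Ω → EuclideanSpace ℝ (Fin d)) (hYm : Measurable Y) (hwm : Measurable w)
    (hindep : IndepFun Y w P)
    (hYint : Integrable (fun ω => ‖Y ω‖ ^ 2) P)
    (hwint : Integrable (fun ω => ‖w ω‖ ^ 2) P)
    (hmean : ∫ ω, w ω ∂P = 0)
    (S : Matrix (Fin d) (Fin d) ℝ)
    (hcov : ∀ i j, ∫ ω, w ω i * w ω j ∂P = S i j)
    (α : ℝ) (hα : 0 < α) (hα' : α ≤ σ / L ^ 2)
    (hfix : P.map Y = P.map (fun ω =>
      Y ω - Real.sqrt α • gradient f (Real.sqrt α • Y ω + xstar) + Real.sqrt α • w ω)) :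
    (∫ ω, ‖Y ω‖ ^ 2 ∂P) ≤ S.trace / (2 * σ - L ^ 2 * α) ∧
      S.trace / (2 * σ - L ^ 2 * α) ≤ S.trace / σ :=
  stmt9_general f L σ hL hσ hsmooth hsc xstar hmin P Y w hYm hwm hindep hYint hwint hmean S hcov α
    hα hα' hfix
end

section
/- Let A ∈ ℝ^{d×d} be Hurwitz, Σ symmetric positive definite, and Σ_Y the unique solution of A Σ_Y + Σ_Y Aᵀ + Σ = 0. If Y ~ N(0, Σ_Y), then E[(tᵀ Σ t − 2i tᵀ A Y) e^{itᵀY}] = 0 for every t ∈ ℝ^d. -/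
open MeasureTheory ProbabilityTheory Complex Matrix
open scoped NNReal

/-! Differentiate `u ↦ E[exp(i (t + u Aᵀt)ᵀ Y)]` at `u = 0` in two ways. Under the integral
this gives `i E[(tᵀAY) e^{itᵀY}]`; on the Gaussian closed form it gives
`-½ (tᵀ Σ_Y Aᵀt + tᵀ A Σ_Y t) e^{-½ tᵀΣ_Y t}`, which the Lyapunov equation turns into
`½ tᵀΣt E[e^{itᵀY}]`. Differentiating under the integral is legitimate because `tᵀAY` has a
centred Gaussian characteristic function, hence is Gaussian and integrable. -/

section CharacteristicFunction

variable {Ω : Type*} [MeasurableSpace Ω] {P : Measure Ω}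

lemma integrable_cexp_I_mul_ofReal [IsFiniteMeasure P] {Z : Ω → ℝ}
    (hZ : AEStronglyMeasurable Z P) : Integrable (fun ω => cexp (I * Z ω)) P :=
  (integrable_const (1 : ℝ)).mono' (by fun_prop)
    (Filter.Eventually.of_forall fun ω => (norm_exp_I_mul_ofReal _).le)

lemma nonneg_of_integral_cexp_I_mul_eq [IsProbabilityMeasure P] {X : Ω → ℝ} {c : ℝ}
    (h : ∫ ω, cexp (I * X ω) ∂P = cexp (-(1 / 2) * c)) : 0 ≤ c := by
  have hle : ‖∫ ω, cexp (I * X ω) ∂P‖ ≤ 1 := by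
    simpa using norm_integral_le_of_norm_le_const (μ := P) (C := 1)
      (Filter.Eventually.of_forall fun ω => (norm_exp_I_mul_ofReal (X ω)).le)
  rw [h, ← ofReal_ofNat, ← ofReal_one, ← ofReal_div, ← ofReal_neg, ← ofReal_mul,
    norm_exp_ofReal] at hle
  linarith [Real.exp_le_one_iff.mp hle]

lemma map_eq_gaussianReal_of_integral_cexp_I_mul_eq [IsProbabilityMeasure P] {X : Ω → ℝ}
    (hX : Measurable X) (c : ℝ≥0)
    (h : ∀ s : ℝ, ∫ ω, cexp (I * ↑(s * X ω)) ∂P = cexp (-(1 / 2) * ↑(s ^ 2 * c))) :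
    P.map X = gaussianReal 0 c := by
  refine Measure.ext_of_charFun (funext fun s => ?_)
  rw [charFun_gaussianReal, charFun_apply_real, integral_map hX.aemeasurable (by fun_prop)]
  convert h s using 2
  · ext ω; push_cast; ring_nf
  · push_cast; ring

lemma integrable_of_integral_cexp_I_mul_eq [IsProbabilityMeasure P] {X : Ω → ℝ}
    (hX : Measurable X) {c : ℝ}
    (h : ∀ s : ℝ, ∫ ω, cexp (I * ↑(s * X ω)) ∂P = cexp (-(1 / 2) * ↑(s ^ 2 * c))) :
    Integrable X P := by
  lift c to ℝ≥0 using nonneg_of_integral_cexp_I_mul_eq (X := X) (by simpa using h 1)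
  have hid : Integrable id (P.map X) := by
    rw [map_eq_gaussianReal_of_integral_cexp_I_mul_eq hX c h]
    exact (memLp_id_gaussianReal 1).integrable le_rfl
  exact (integrable_map_measure aestronglyMeasurable_id hX.aemeasurable).mp hid

lemma hasDerivAt_integral_cexp_I_mul_add_mul [IsFiniteMeasure P] {Z X : Ω → ℝ}
    (hZ : AEStronglyMeasurable Z P) (hX : Integrable X P) :
    HasDerivAt (fun u : ℝ => ∫ ω, cexp (I * ↑(Z ω + u * X ω)) ∂P)
      (∫ ω, I * X ω * cexp (I * Z ω) ∂P) 0 := by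
  have hderiv : ∀ ω u, HasDerivAt (fun u : ℝ => cexp (I * ↑(Z ω + u * X ω)))
      (I * X ω * cexp (I * ↑(Z ω + u * X ω))) u := by
    intro ω u
    have := (((hasDerivAt_id' u).mul_const (X ω)).const_add (Z ω)).ofReal_comp.const_mul I
    convert this.cexp using 1
    push_cast
    ring
  have hbound : ∀ ω u, ‖I * X ω * cexp (I * ↑(Z ω + u * X ω))‖ = |X ω| := by
    intro ω u
    rw [norm_mul, norm_exp_I_mul_ofReal]
    simp
  have hXm := hX.aestronglyMeasurable
  have := hasDerivAt_integral_of_dominated_loc_of_deriv_le (μ := P) (x₀ := (0 : ℝ))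
    (F := fun u ω => cexp (I * ↑(Z ω + u * X ω)))
    (F' := fun u ω => I * X ω * cexp (I * ↑(Z ω + u * X ω)))
    (bound := fun ω => |X ω|) (Metric.ball_mem_nhds 0 one_pos)
    (Filter.Eventually.of_forall fun u => by fun_prop)
    (by simpa using integrable_cexp_I_mul_ofReal hZ) (by fun_prop)
    (Filter.Eventually.of_forall fun ω u _ => (hbound ω u).le) hX.abs
    (Filter.Eventually.of_forall fun ω u _ => hderiv ω u)
  simpa using this.2

end CharacteristicFunction

section QuadraticForm

variable {n R : Type*} [Fintype n] [CommRing R]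

lemma add_smul_dotProduct_mulVec_add_smul (M : Matrix n n R) (t v : n → R) (u : R) :
    (t + u • v) ⬝ᵥ M *ᵥ (t + u • v) =
      t ⬝ᵥ M *ᵥ t + u * (t ⬝ᵥ M *ᵥ v + v ⬝ᵥ M *ᵥ t) + u ^ 2 * (v ⬝ᵥ M *ᵥ v) := by
  simp only [mulVec_add, mulVec_smul, add_dotProduct, dotProduct_add, smul_dotProduct,
    dotProduct_smul, smul_eq_mul]
  ring

lemma dotProduct_mulVec_transpose_add_of_lyapunov {A S SY : Matrix n n R}
    (hLyap : A * SY + SY * Aᵀ + S = 0) (t : n → R) :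
    t ⬝ᵥ SY *ᵥ (Aᵀ *ᵥ t) + (Aᵀ *ᵥ t) ⬝ᵥ SY *ᵥ t = -(t ⬝ᵥ S *ᵥ t) := by
  have h : t ⬝ᵥ (A * SY + SY * Aᵀ + S) *ᵥ t = 0 := by simp [hLyap]
  rw [add_mulVec, add_mulVec, dotProduct_add, dotProduct_add, ← mulVec_mulVec,
    ← mulVec_mulVec, dotProduct_mulVec t A, ← mulVec_transpose] at h
  linear_combination h

lemma hasDerivAt_add_smul_dotProduct_mulVec_add_smul (M : Matrix n n ℝ) (t v : n → ℝ) :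
    HasDerivAt (fun u : ℝ => (t + u • v) ⬝ᵥ M *ᵥ (t + u • v))
      (t ⬝ᵥ M *ᵥ v + v ⬝ᵥ M *ᵥ t) 0 := by
  simp_rw [add_smul_dotProduct_mulVec_add_smul]
  have := (((hasDerivAt_id' 0).mul_const (t ⬝ᵥ M *ᵥ v + v ⬝ᵥ M *ᵥ t)).const_add
    (t ⬝ᵥ M *ᵥ t)).add ((hasDerivAt_pow 2 (0 : ℝ)).mul_const (v ⬝ᵥ M *ᵥ v))
  exact this.congr_deriv (by norm_num)

end QuadraticForm

section GaussianVector

variable {n Ω : Type*} [Fintype n] [MeasurableSpace Ω] {P : Measure Ω} [IsProbabilityMeasure P]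
  {SY : Matrix n n ℝ} {Y : Ω → n → ℝ}

lemma integrable_dotProduct_of_charFun (hY : Measurable Y)
    (hchar : ∀ t : n → ℝ, ∫ ω, cexp (I * ↑(t ⬝ᵥ Y ω)) ∂P = cexp (-(1 / 2) * ↑(t ⬝ᵥ SY *ᵥ t)))
    (v : n → ℝ) : Integrable (fun ω => v ⬝ᵥ Y ω) P :=
  integrable_of_integral_cexp_I_mul_eq (by fun_prop) (c := v ⬝ᵥ SY *ᵥ v) fun s => by
    simpa [smul_dotProduct, mulVec_smul, dotProduct_smul, pow_two, mul_assoc]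
      using hchar (s • v)

lemma integral_I_mul_dotProduct_mul_cexp_of_charFun (hY : Measurable Y)
    (hchar : ∀ t : n → ℝ, ∫ ω, cexp (I * ↑(t ⬝ᵥ Y ω)) ∂P = cexp (-(1 / 2) * ↑(t ⬝ᵥ SY *ᵥ t)))
    (t v : n → ℝ) :
    ∫ ω, I * ↑(v ⬝ᵥ Y ω) * cexp (I * ↑(t ⬝ᵥ Y ω)) ∂P =
      -(1 / 2) * ↑(t ⬝ᵥ SY *ᵥ v + v ⬝ᵥ SY *ᵥ t) * ∫ ω, cexp (I * ↑(t ⬝ᵥ Y ω)) ∂P := by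
  have hderiv := hasDerivAt_integral_cexp_I_mul_add_mul (Z := fun ω => t ⬝ᵥ Y ω)
    (by fun_prop) (integrable_dotProduct_of_charFun hY hchar v)
  have hchar_line : (fun u : ℝ => ∫ ω, cexp (I * ↑(t ⬝ᵥ Y ω + u * v ⬝ᵥ Y ω)) ∂P) =
      fun u => cexp (-(1 / 2) * ↑((t + u • v) ⬝ᵥ SY *ᵥ (t + u • v))) := by
    ext u
    simpa [add_dotProduct, smul_dotProduct] using hchar (t + u • v)
  rw [hchar_line] at hderiv
  have hgauss := ((hasDerivAt_add_smul_dotProduct_mulVec_add_smul SY t v).ofReal_comp.const_mul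
    (-(1 / 2) : ℂ)).cexp
  rw [hderiv.unique hgauss, hchar t, zero_smul, add_zero]
  ring

end GaussianVector

theorem stmt12_general {d : ℕ} {Ω : Type*} [MeasurableSpace Ω] (P : Measure Ω)
    [IsProbabilityMeasure P]
    (A S SY : Matrix (Fin d) (Fin d) ℝ)
    (hLyap : A * SY + SY * Aᵀ + S = 0)
    (Y : Ω → Fin d → ℝ) (hY : Measurable Y)
    (hchar : ∀ t : Fin d → ℝ,
      ∫ ω, Complex.exp (Complex.I * ((t ⬝ᵥ Y ω : ℝ) : ℂ)) ∂P =
        Complex.exp (-(1 / 2 : ℂ) * ((t ⬝ᵥ SY.mulVec t : ℝ) : ℂ))) :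
    ∀ t : Fin d → ℝ,
      ∫ ω, (((t ⬝ᵥ S.mulVec t : ℝ) : ℂ) -
          2 * Complex.I * ((t ⬝ᵥ A.mulVec (Y ω) : ℝ) : ℂ)) *
          Complex.exp (Complex.I * ((t ⬝ᵥ Y ω : ℝ) : ℂ)) ∂P = 0 := by
  intro t
  have hsplit : ∀ ω, (↑(t ⬝ᵥ S *ᵥ t) - 2 * I * ↑(t ⬝ᵥ A *ᵥ Y ω)) * cexp (I * ↑(t ⬝ᵥ Y ω)) =
      ↑(t ⬝ᵥ S *ᵥ t) * cexp (I * ↑(t ⬝ᵥ Y ω)) -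
        2 * (I * ↑((Aᵀ *ᵥ t) ⬝ᵥ Y ω) * cexp (I * ↑(t ⬝ᵥ Y ω))) := fun ω => by
    rw [dotProduct_mulVec t A, ← mulVec_transpose]; ring
  have he : Integrable (fun ω => cexp (I * ↑(t ⬝ᵥ Y ω))) P :=
    integrable_cexp_I_mul_ofReal (by fun_prop)
  have hve : Integrable (fun ω => I * ↑((Aᵀ *ᵥ t) ⬝ᵥ Y ω) * cexp (I * ↑(t ⬝ᵥ Y ω))) P :=
    ((integrable_dotProduct_of_charFun hY hchar _).ofReal.const_mul I).mul_bdd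
      he.aestronglyMeasurable (ae_of_all _ fun ω => (norm_exp_I_mul_ofReal (t ⬝ᵥ Y ω)).le)
  simp_rw [hsplit]
  rw [integral_sub (he.const_mul _) (hve.const_mul 2), integral_const_mul, integral_const_mul,
    integral_I_mul_dotProduct_mul_cexp_of_charFun hY hchar,
    dotProduct_mulVec_transpose_add_of_lyapunov hLyap]
  push_cast
  ring

theorem stmt12 {d : ℕ} {Ω : Type*} [MeasurableSpace Ω] (P : Measure Ω)
    [IsProbabilityMeasure P]
    (A S SY : Matrix (Fin d) (Fin d) ℝ)
    (hA : ∀ μ ∈ spectrum ℂ (A.map Complex.ofReal), μ.re < 0)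
    (hS : S.PosDef)
    (hLyap : A * SY + SY * Aᵀ + S = 0)
    (Y : Ω → Fin d → ℝ) (hY : Measurable Y)
    (hchar : ∀ t : Fin d → ℝ,
      ∫ ω, Complex.exp (Complex.I * ((t ⬝ᵥ Y ω : ℝ) : ℂ)) ∂P =
        Complex.exp (-(1 / 2 : ℂ) * ((t ⬝ᵥ SY.mulVec t : ℝ) : ℂ))) :
    ∀ t : Fin d → ℝ,
      ∫ ω, (((t ⬝ᵥ S.mulVec t : ℝ) : ℂ) -
          2 * Complex.I * ((t ⬝ᵥ A.mulVec (Y ω) : ℝ) : ℂ)) *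
          Complex.exp (Complex.I * ((t ⬝ᵥ Y ω : ℝ) : ℂ)) ∂P = 0 :=
  stmt12_general P A S SY hLyap Y hY hchar
end
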